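/- Assume α ≥ 5, (s, σ, w, η, x, u) ∈ Δ, y ∈ Σ_k with y ≠ x, and (r, β) ∈ Π(s, σ, w, η, x, u, y). If r^β is not a suffix of the word ηxuy, then r^(β−2) is a suffix of ηxuy and r^(β−1) is a suffix of wηxuy. -/

import Mathlib

/-!
Let `p = r^β` be the given suffix of `g = sσwηxuy` and `T = ηxuy`, so `|p| > |T|`.
The letter `x` sits just before `uy` and occurs nowhere in `uy`, so the period `|r|` cannot
map it into `uy`: `|r| > |uy|`. Dropping the last letter of `p` gives a power in the
`α`-power-free word `sσwηxu`, so `|p| - 1 < α|r|`. If `p` covered `wT` and `|r|` more letters,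
the period would produce a second occurrence of `w` in `sσw`; hence `|p| < |T| + |w| + |r|`.
Finally, if `|p| > |T| + 2|r|` then `|u| < |r| < |w|`, and the `Γ` condition gives
`|η| ≥ α|w| > α|r| > |p| - 1`, contradicting `|p| > |T| > |η|`. So removing one or two periods
from `p` leaves a suffix of `wT`, respectively of `T`.
-/

namespace PowerFreeFormalization

variable {A : Type*}

/-- `p` is the `β`-power `r^β` of the nonempty word `r`:
`|p| = β * |r|` and `p` is a prefix of `r r r ⋯`. -/
def IsPow (r p : List A) (β : ℚ) : Prop :=
  r ≠ [] ∧ (p.length : ℚ) = β * r.length ∧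
    p <+: (List.replicate p.length r).flatten

/-- A finite word `w` is `α`-power free: no factor of `w` is an `r^β` with `β ≥ α`. -/
def PowFree (α : ℚ) (w : List A) : Prop :=
  ∀ (r p : List A) (β : ℚ), α ≤ β → IsPow r p β → ¬ p <:+: w

/-- `p` is a finite factor of the right-infinite word `f : ℕ → A`, occurring at position `i`. -/
def OccursR (f : ℕ → A) (p : List A) (i : ℕ) : Prop :=
  p = (List.range p.length).map fun j => f (i + j)

/-- `p` is a finite factor of the right-infinite word `f`. -/
def FactorR (f : ℕ → A) (p : List A) : Prop :=
  ∃ i : ℕ, OccursR f p i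

/-- A left-infinite word is `g : ℕ → A`, where `g 0` is the rightmost letter,
`g 1` the one before it, etc.  `p` occurs in `g` ending at offset `i` from the
right end (offset `0` means `p` is a suffix). -/
def OccursL (g : ℕ → A) (p : List A) (i : ℕ) : Prop :=
  p.reverse = (List.range p.length).map fun j => g (i + j)

/-- `p` is a finite factor of the left-infinite word `g`. -/
def FactorL (g : ℕ → A) (p : List A) : Prop :=
  ∃ i : ℕ, OccursL g p i

/-- `p` is a suffix of the left-infinite word `g`. -/
def SuffixL (g : ℕ → A) (p : List A) : Prop :=
  OccursL g p 0

/-- `p` is a finite factor of the bi-infinite word `h : ℤ → A`, at position `i`. -/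
def OccursZ (h : ℤ → A) (p : List A) (i : ℤ) : Prop :=
  p = (List.range p.length).map fun j => h (i + j)

/-- `p` is a finite factor of the bi-infinite word `h`. -/
def FactorZ (h : ℤ → A) (p : List A) : Prop :=
  ∃ i : ℤ, OccursZ h p i

/-- A right-infinite word is `α`-power free iff all its finite factors are. -/
def PowFreeR (α : ℚ) (f : ℕ → A) : Prop :=
  ∀ p, FactorR f p → PowFree α p

/-- A left-infinite word is `α`-power free iff all its finite factors are. -/
def PowFreeL (α : ℚ) (g : ℕ → A) : Prop :=
  ∀ p, FactorL g p → PowFree α p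

/-- A bi-infinite word is `α`-power free iff all its finite factors are. -/
def PowFreeZ (α : ℚ) (h : ℤ → A) : Prop :=
  ∀ p, FactorZ h p → PowFree α p

/-- Appending a finite word `u` on the right end of a left-infinite word `g`,
yielding the left-infinite word `g u`. -/
def appendL (g : ℕ → A) (u : List A) : ℕ → A :=
  fun n => u.reverse.getD n (g (n - u.length))

/-- `p` is a recurrent factor of the right-infinite word `f`
(infinitely many occurrences). -/
def RecR (f : ℕ → A) (p : List A) : Prop :=
  ∀ N : ℕ, ∃ i, N ≤ i ∧ OccursR f p i

/-- `p` is a recurrent factor of the left-infinite word `g`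
(infinitely many occurrences). -/
def RecL (g : ℕ → A) (p : List A) : Prop :=
  ∀ N : ℕ, ∃ i, N ≤ i ∧ OccursL g p i

/-- `p` is a recurrent factor of the bi-infinite word `h`
(infinitely many occurrences). -/
def RecZ (h : ℤ → A) (p : List A) : Prop :=
  {i : ℤ | OccursZ h p i}.Infinite

/-- The bi-infinite word `g m f` obtained by concatenating a left-infinite word `g`,
a finite word `m` (starting at index `0`) and a right-infinite word `f`. -/
def biJoin (g : ℕ → A) (m : List A) (f : ℕ → A) : ℤ → A :=
  fun i => if i < 0 then g (-(i + 1)).toNat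
    else m.getD i.toNat (f (i.toNat - m.length))

/-- The set `Γ`:  triples `(w, η, u)` with `w` nonempty and, whenever `|u| ≤ |w|`,
`|η| ≥ (α+1)·α^(|w|-|u|)·|w|`. -/
def Gamma (α : ℚ) (w η u : List A) : Prop :=
  w ≠ [] ∧ (u.length ≤ w.length →
    (α + 1) * α ^ (w.length - u.length) * (w.length : ℚ) ≤ (η.length : ℚ))

/-- The set `Δ`: 6-tuples `(s, σ, w, η, x, u)` with `s` left-infinite, `w` nonempty,
such that `sσwηxu` is `α`-power free, `(w,η,u) ∈ Γ`, `w` occurs exactly once in `sσw`,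
and `x` is not a factor of `s` nor of `u`. -/
def Delta (α : ℚ) (s : ℕ → A) (σ w η : List A) (x : A) (u : List A) : Prop :=
  w ≠ [] ∧
  PowFreeL α (appendL s (σ ++ w ++ η ++ [x] ++ u)) ∧
  Gamma α w η u ∧
  (∃! i : ℕ, OccursL (appendL s (σ ++ w)) w i) ∧
  ¬ FactorL s [x] ∧ ¬ [x] <:+: u

/-- `(r, β) ∈ Π(s, σ, w, η, x, u, y)`:  `r` nonempty, `β > α` rational, `uy` is
`α`-power free and `r^β` is a suffix of the left-infinite word `sσwηxuy`. -/
def PiCond (α : ℚ) (s : ℕ → A) (σ w η : List A) (x : A) (u : List A) (y : A)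
    (r : List A) (β : ℚ) : Prop :=
  r ≠ [] ∧ α < β ∧ PowFree α (u ++ [y]) ∧
  ∃ p : List A, IsPow r p β ∧ SuffixL (appendL s (σ ++ w ++ η ++ [x] ++ u ++ [y])) p


open List

section Powers

variable {r p : List A} {β : ℚ}

theorem flatten_replicate_prefix_flatten_replicate (r : List A) {m n : ℕ} (h : m ≤ n) :
    (replicate m r).flatten <+: (replicate n r).flatten := by
  obtain ⟨k, rfl⟩ := Nat.exists_eq_add_of_le h
  rw [replicate_add, flatten_append]
  exact prefix_append _ _

theorem prefix_flatten_replicate_length (hr : r ≠ []) {n : ℕ}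
    (hp : p <+: (replicate n r).flatten) : p <+: (replicate p.length r).flatten := by
  refine prefix_of_prefix_length_le
    (hp.trans (flatten_replicate_prefix_flatten_replicate r (le_max_left n p.length)))
    (flatten_replicate_prefix_flatten_replicate r (le_max_right n p.length)) ?_
  simp only [length_flatten, map_replicate, sum_replicate, smul_eq_mul]
  exact Nat.le_mul_of_pos_right _ (length_pos_iff.mpr hr)

theorem drop_length_prefix_of_prefix_flatten_replicate {n : ℕ}
    (hp : p <+: (replicate n r).flatten) : p.drop r.length <+: p := by
  have hsucc : p <+: (replicate (n + 1) r).flatten := by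
    rw [replicate_succ', flatten_append]
    exact hp.trans (prefix_append _ _)
  have hdrop := hsucc.drop r.length
  rw [replicate_succ, flatten_cons, drop_left] at hdrop
  exact prefix_of_prefix_length_le hdrop hp (by simp)

theorem getElem_add_length_of_prefix_flatten_replicate {n : ℕ}
    (hp : p <+: (replicate n r).flatten) {i : ℕ} (hi : i + r.length < p.length) :
    p[i + r.length] = p[i] := by
  have h := (drop_length_prefix_of_prefix_flatten_replicate hp).getElem
    (i := i) (by rw [length_drop]; omega)
  simpa [add_comm] using h

theorem IsPow.take (h : IsPow r p β) {n : ℕ} (hn : n ≤ p.length) :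
    IsPow r (p.take n) (n / r.length) := by
  obtain ⟨hr, -, hpre⟩ := h
  have hr0 : (r.length : ℚ) ≠ 0 := by exact_mod_cast (length_pos_iff.mpr hr).ne'
  refine ⟨hr, ?_, prefix_flatten_replicate_length hr ((take_prefix n p).trans hpre)⟩
  rw [length_take_of_le hn]
  field_simp

theorem IsPow.drop_length (h : IsPow r p β) (hβ : 1 ≤ β) :
    IsPow r (p.drop r.length) (β - 1) := by
  obtain ⟨hr, hlen, hpre⟩ := h
  have hrp : (r.length : ℚ) ≤ p.length := by
    rw [hlen]
    exact le_mul_of_one_le_left (Nat.cast_nonneg _) hβ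
  refine ⟨hr, ?_, prefix_flatten_replicate_length hr
    ((drop_length_prefix_of_prefix_flatten_replicate hpre).trans hpre)⟩
  rw [length_drop, Nat.cast_sub (by exact_mod_cast hrp), hlen]
  ring

end Powers

section LeftInfinite

variable {g : ℕ → A} {p q : List A} {i : ℕ}

theorem occursL_iff :
    OccursL g p i ↔ ∀ j (hj : j < p.reverse.length), p.reverse[j] = g (i + j) := by
  unfold OccursL
  rw [ext_getElem_iff]
  simp

theorem suffixL_iff :
    SuffixL g p ↔ ∀ j (hj : j < p.reverse.length), p.reverse[j] = g j := by
  simp [SuffixL, occursL_iff]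

theorem OccursL.of_suffix (h : OccursL g p i) (hq : q <:+ p) : OccursL g q i := by
  rw [occursL_iff] at h ⊢
  intro j hj
  rw [← h j (hj.trans_le (by simpa using hq.length_le))]
  exact (reverse_prefix.mpr hq).getElem hj

theorem OccursL.dropLast (h : OccursL g p i) : OccursL g p.dropLast (i + 1) := by
  rw [occursL_iff] at h ⊢
  intro j hj
  simp only [← tail_reverse, getElem_tail, h, add_assoc, add_comm 1 j]

theorem OccursL.add_of_periodic {d : ℕ} (h : OccursL g p i)
    (hg : ∀ j < p.length, g (i + j + d) = g (i + j)) : OccursL g p (i + d) := by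
  rw [occursL_iff] at h ⊢
  intro j hj
  rw [h, add_right_comm, hg j (by simpa using hj)]

theorem SuffixL.suffix_of_length_le (hp : SuffixL g p) (hq : SuffixL g q)
    (h : p.length ≤ q.length) : p <:+ q := by
  unfold SuffixL OccursL at hp hq
  rw [← reverse_prefix, hp, hq]
  exact IsPrefix.map _ (prefix_iff_eq_take.mpr (by simp [h]))

theorem suffixL_appendL (s : ℕ → A) (L : List A) : SuffixL (appendL s L) L := by
  rw [suffixL_iff]
  intro j hj
  simp [appendL, getElem?_eq_getElem hj]

theorem appendL_append_add_length (s : ℕ → A) (L M : List A) (n : ℕ) :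
    appendL s (L ++ M) (n + M.length) = appendL s L n := by
  unfold appendL
  rw [reverse_append, getD_append_right _ _ _ _ (by simp), length_append]
  simp [Nat.add_sub_add_right]

theorem occursL_appendL_append_iff {s : ℕ → A} {L M : List A} :
    OccursL (appendL s (L ++ M)) p (i + M.length) ↔ OccursL (appendL s L) p i := by
  simp only [occursL_iff, add_right_comm i M.length, appendL_append_add_length]

theorem SuffixL.apply_add_length (hs : SuffixL g p) {r : List A} {β : ℚ} (hpow : IsPow r p β)
    {a : ℕ} (ha : a + r.length < p.length) : g (a + r.length) = g a := by
  rw [suffixL_iff] at hs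
  rw [← hs a (by rw [length_reverse]; omega), ← hs _ (by simpa using ha), getElem_reverse,
    getElem_reverse]
  have h := getElem_add_length_of_prefix_flatten_replicate hpow.2.2
    (i := p.length - 1 - (a + r.length)) (by omega)
  simp only [show p.length - 1 - (a + r.length) + r.length = p.length - 1 - a by omega] at h
  exact h.symm

end LeftInfinite

section PowerSuffixes

variable {g : ℕ → A} {p r : List A} {β : ℚ}

theorem length_lt_length_of_suffixL_cons {x : A} {v : List A} (hxv : SuffixL g (x :: v))
    (hx : x ∉ v) (hp : SuffixL g p) (hpow : IsPow r p β) (hvp : v.length < p.length) :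
    v.length < r.length := by
  by_contra! hrv
  have hr := length_pos_iff.mpr hpow.1
  have hgx : g v.length = x := by
    simpa using ((suffixL_iff.mp hxv) v.length (by simp)).symm
  have hper := hp.apply_add_length hpow (a := v.length - r.length) (by omega)
  rw [Nat.sub_add_cancel hrv, hgx] at hper
  have hv := (suffixL_iff.mp (hxv.of_suffix (suffix_cons x v))) (v.length - r.length)
    (by rw [length_reverse]; omega)
  exact hx (hper ▸ hv ▸ mem_reverse.mp (getElem_mem _))

theorem PowFreeL.length_sub_one_lt {α : ℚ} {s : ℕ → A} {L : List A} {y : A}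
    (hfree : PowFreeL α (appendL s L)) (hp : SuffixL (appendL s (L ++ [y])) p)
    (hpow : IsPow r p β) : ((p.length - 1 : ℕ) : ℚ) < α * r.length := by
  have hocc : OccursL (appendL s L) p.dropLast 0 :=
    (occursL_appendL_append_iff (M := [y])).mp (by simpa using hp.dropLast)
  have hpow' : IsPow r p.dropLast ((p.length - 1 : ℕ) / r.length) := by
    simpa [dropLast_eq_take] using hpow.take (Nat.sub_le p.length 1)
  have hr : (0 : ℚ) < r.length := by exact_mod_cast length_pos_iff.mpr hpow.1
  rw [← div_lt_iff₀ hr]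
  by_contra! h
  exact hfree _ ⟨0, hocc⟩ r _ _ h hpow' (infix_refl _)

theorem length_lt_of_existsUnique_occursL {s : ℕ → A} {L M w : List A}
    (huniq : ∃! i, OccursL (appendL s L) w i) (hw : w <:+ L)
    (hp : SuffixL (appendL s (L ++ M)) p) (hpow : IsPow r p β) :
    p.length < M.length + w.length + r.length := by
  by_contra! h
  have hw0 : OccursL (appendL s L) w 0 := (suffixL_appendL s L).of_suffix hw
  have hwM : OccursL (appendL s (L ++ M)) w (0 + M.length + r.length) :=
    (occursL_appendL_append_iff.mpr hw0).add_of_periodic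
      fun j hj => hp.apply_add_length hpow (by omega)
  have hwr : OccursL (appendL s L) w r.length :=
    occursL_appendL_append_iff.mp (by rwa [add_right_comm, zero_add] at hwM)
  exact hpow.1 (length_eq_zero_iff.mp (huniq.unique hw0 hwr).symm)

theorem Gamma.mul_length_le {α : ℚ} {w η u : List A} (h : Gamma α w η u) (hα : 1 ≤ α)
    (hu : u.length ≤ w.length) : α * w.length ≤ η.length := by
  refine le_trans ?_ (h.2 hu)
  have hpow : 1 ≤ α ^ (w.length - u.length) := one_le_pow₀ hα
  have hcoef : α ≤ (α + 1) * α ^ (w.length - u.length) := by nlinarith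
  exact mul_le_mul_of_nonneg_right hcoef (Nat.cast_nonneg _)

theorem exists_isPow_sub_suffix_of_length_le {V : List A} (hp : SuffixL g p)
    (hpow : IsPow r p β) (hV : SuffixL g V) (n : ℕ) (hβ : n ≤ β)
    (hlen : p.length ≤ V.length + n * r.length) : ∃ q, IsPow r q (β - n) ∧ q <:+ V := by
  induction n generalizing p β with
  | zero => exact ⟨p, by simpa using hpow, hp.suffix_of_length_le hV (by simpa using hlen)⟩
  | succ n ih =>
    push_cast at hβ
    have hn : (0 : ℚ) ≤ n := Nat.cast_nonneg n
    obtain ⟨q, hq, hqV⟩ := ih (hp.of_suffix (drop_suffix r.length p))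
      (hpow.drop_length (by linarith)) (by linarith) (by rw [length_drop]; grind)
    exact ⟨q, by convert hq using 1; push_cast; ring, hqV⟩

end PowerSuffixes

theorem statement7_general (k : ℕ) (α : ℚ) (hα : 5 ≤ α)
    (s : ℕ → Fin k) (σ w η u : List (Fin k)) (x y : Fin k)
    (r : List (Fin k)) (β : ℚ)
    (hΔ : Delta α s σ w η x u) (hyx : y ≠ x)
    (hPi : PiCond α s σ w η x u y r β)
    (hnsuf : ¬ ∃ p : List (Fin k), IsPow r p β ∧ p <:+ (η ++ [x] ++ u ++ [y])) :
    (∃ p : List (Fin k), IsPow r p (β - 2) ∧ p <:+ (η ++ [x] ++ u ++ [y])) ∧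
    (∃ p : List (Fin k), IsPow r p (β - 1) ∧ p <:+ (w ++ η ++ [x] ++ u ++ [y])) := by
  obtain ⟨-, hfree, hΓ, huniq, -, hxu⟩ := hΔ
  obtain ⟨-, hαβ, -, p, hpow, hp⟩ := hPi
  have hpr := hfree.length_sub_one_lt hp hpow
  set T := η ++ [x] ++ u ++ [y]
  rw [show σ ++ w ++ η ++ [x] ++ u ++ [y] = σ ++ w ++ T by simp [T]] at hp
  have hTlen : T.length = η.length + u.length + 2 := by
    simp only [T, length_append, length_singleton]; omega
  have hg := suffixL_appendL s (σ ++ w ++ T)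
  have hT : SuffixL _ T := hg.of_suffix (suffix_append _ _)
  have hwT : SuffixL _ (w ++ η ++ [x] ++ u ++ [y]) := hg.of_suffix ⟨σ, by simp [T]⟩
  have hTp : T.length < p.length := by
    by_contra! h
    exact hnsuf ⟨p, hpow, hp.suffix_of_length_le hT h⟩
  have hx : x ∉ u ++ [y] := by
    rw [mem_append, mem_singleton, ← singleton_infix_iff]
    exact not_or.mpr ⟨hxu, hyx.symm⟩
  have hur : u.length + 1 < r.length := by
    simpa using length_lt_length_of_suffixL_cons (hg.of_suffix ⟨σ ++ w ++ η, by simp [T]⟩)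
      hx hp hpow (by rw [length_append, length_singleton]; omega)
  have hpw := length_lt_of_existsUnique_occursL huniq (suffix_append σ w) hp hpow
  have h2r : p.length ≤ T.length + 2 * r.length := by
    by_contra! h
    have hrw : (r.length : ℚ) + 1 ≤ w.length := by
      exact_mod_cast (by omega : r.length < w.length)
    have hη := hΓ.mul_length_le (by linarith) (by omega)
    have hηp : (η.length : ℚ) + 2 ≤ p.length := by
      exact_mod_cast (by omega : η.length + 2 ≤ p.length)
    rw [Nat.cast_sub (by omega), Nat.cast_one] at hpr
    nlinarith
  constructor
  · simpa using exists_isPow_sub_suffix_of_length_le hp hpow hT 2 (by push_cast; linarith) h2r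
  · simpa using exists_isPow_sub_suffix_of_length_le hp hpow hwT 1 (by push_cast; linarith)
      (by simp only [length_append, length_singleton]; omega)

/-- Lemma: if `(s,σ,w,η,x,u) ∈ Δ`, `y ≠ x`,
`(r,β) ∈ Π(s,σ,w,η,x,u,y)` and `r^β` is not a suffix of `ηxuy`, then `r^(β-2)` is a
suffix of `ηxuy` and `r^(β-1)` is a suffix of `wηxuy`. -/
theorem statement7 (k : ℕ) (hk : 3 ≤ k) (α : ℚ) (hα : 5 ≤ α)
    (s : ℕ → Fin k) (σ w η u : List (Fin k)) (x y : Fin k)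
    (r : List (Fin k)) (β : ℚ)
    (hΔ : Delta α s σ w η x u) (hyx : y ≠ x)
    (hPi : PiCond α s σ w η x u y r β)
    (hnsuf : ¬ ∃ p : List (Fin k), IsPow r p β ∧ p <:+ (η ++ [x] ++ u ++ [y])) :
    (∃ p : List (Fin k), IsPow r p (β - 2) ∧ p <:+ (η ++ [x] ++ u ++ [y])) ∧
    (∃ p : List (Fin k), IsPow r p (β - 1) ∧ p <:+ (w ++ η ++ [x] ++ u ++ [y])) :=
  statement7_general k α hα s σ w η u x y r β hΔ hyx hPi hnsuf

end PowerFreeFormalization
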